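/- Let A ⊆ ℕ. Then the decoding oracle d_{H₀^A ⊗ H₁^A, H₁^A ⊗ H₀^A} is T1-equivalent to the decoding oracle d_{H₀^A, H₁^A}: each is T1-reducible to the other. -/

import Mathlib

open Classical in
/-- The oracle game: the list of previous answers by Merlin up to stage `i`,
for the answer sequence `s`. -/
def prefixList (s : ℕ → ℕ) (i : ℕ) : List ℕ := List.ofFn (fun j : Fin i => s j)

/-- A winning Arthur+Nimue strategy for the reduction game of the basic oracle `ℱ`
to the basic oracle `𝒢`. -/
def Winning (ℱ 𝒢 : Set (Set ℕ)) (σ : List ℕ →. Option ℕ) (ν : Set ℕ → List ℕ → Set ℕ) : Prop :=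
  (∀ F ∈ ℱ, ∀ l : List ℕ, ν F l ∈ 𝒢) ∧
  ∀ F ∈ ℱ, ∀ s : ℕ → ℕ, (∀ i, s i ∈ ν F (prefixList s i)) →
    ∃ k, (∀ i ≤ k, (σ (prefixList s i)).Dom) ∧
      (∀ i < k, none ∈ σ (prefixList s i)) ∧
      ∃ u ∈ F, some u ∈ σ (prefixList s k)

/-- The encoding of an Arthur strategy as a partial function `ℕ →. ℕ`, via the
standard Mathlib encodings of `List ℕ` and `Option ℕ`. -/
def arthurCode (σ : List ℕ →. Option ℕ) : ℕ →. ℕ :=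
  fun n => (σ (Denumerable.ofNat (List ℕ) n)).map Encodable.encode

open Classical in
/-- The decoding oracle associated to the promise problem `(P, Q)`: value `0` on `P`,
value `1` on `Q`, undefined elsewhere. -/
noncomputable def dOracle (P Q : Set ℕ) : ℕ →. ℕ :=
  fun n => ⟨n ∈ P ∪ Q, fun _ => if n ∈ Q then 1 else 0⟩

open Classical in
/-- The characteristic function of a set of naturals. -/
noncomputable def chi (A : Set ℕ) : ℕ → ℕ := fun n => if n ∈ A then 1 else 0

/-- The coded cartesian product of two sets of naturals. -/
def tensor (P Q : Set ℕ) : Set ℕ := {x | ∃ p ∈ P, ∃ q ∈ Q, x = Nat.pair p q}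

infixl:70 " ⊗ " => tensor

/-- Oracle computability, as in Mathlib's `Nat.RecursiveIn`. -/
inductive Nat.RecursiveIn' (g : ℕ →. ℕ) : (ℕ →. ℕ) → Prop
  | zero : Nat.RecursiveIn' g fun _ => 0
  | succ : Nat.RecursiveIn' g Nat.succ
  | left : Nat.RecursiveIn' g fun n => (Nat.unpair n).1
  | right : Nat.RecursiveIn' g fun n => (Nat.unpair n).2
  | oracle : Nat.RecursiveIn' g g
  | pair {f h : ℕ →. ℕ} (hf : Nat.RecursiveIn' g f) (hh : Nat.RecursiveIn' g h) :
      Nat.RecursiveIn' g fun n => (Nat.pair <$> f n <*> h n)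
  | comp {f h : ℕ →. ℕ} (hf : Nat.RecursiveIn' g f) (hh : Nat.RecursiveIn' g h) :
      Nat.RecursiveIn' g fun n => h n >>= f
  | prec {f h : ℕ →. ℕ} (hf : Nat.RecursiveIn' g f) (hh : Nat.RecursiveIn' g h) :
      Nat.RecursiveIn' g
        (Nat.unpaired fun a n =>
          n.rec (f a) fun y IH => do
            let i ← IH
            h (Nat.pair a (Nat.pair y i)))
  | rfind {f : ℕ →. ℕ} (hf : Nat.RecursiveIn' g f) :
      Nat.RecursiveIn' g fun a =>
        Nat.rfind fun n => (fun m => m = 0) <$> f (Nat.pair a n)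

/-- `f` is T1-reducible to `g`: some partial function recursive in the oracle `g`
extends `f`. -/
def T1Reducible (f g : ℕ →. ℕ) : Prop :=
  ∃ h : ℕ →. ℕ, Nat.RecursiveIn' g h ∧ ∀ n : ℕ, ∀ a ∈ f n, a ∈ h n

/-- `f` is T1-computable: it has a partial computable extension. -/
def T1Computable (f : ℕ →. ℕ) : Prop :=
  ∃ h : ℕ →. ℕ, Nat.Partrec h ∧ ∀ n : ℕ, ∀ a ∈ f n, a ∈ h n

/-- Codes for oracle computations: Mathlib's `Nat.Partrec.Code` extended by an
`oracle` constructor. -/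
inductive OCode : Type
  | zero : OCode
  | succ : OCode
  | left : OCode
  | right : OCode
  | oracle : OCode
  | pair : OCode → OCode → OCode
  | comp : OCode → OCode → OCode
  | prec : OCode → OCode → OCode
  | rfind' : OCode → OCode

/-- Evaluation of an oracle code relative to the oracle `g`, by the same structural
recursion as Mathlib's `Nat.Partrec.Code.eval`. -/
def OCode.eval (g : ℕ →. ℕ) : OCode → ℕ →. ℕ
  | .zero => pure 0
  | .succ => Nat.succ
  | .left => ↑fun n : ℕ => n.unpair.1
  | .right => ↑fun n : ℕ => n.unpair.2
  | .oracle => g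
  | .pair cf cg => fun n => Nat.pair <$> cf.eval g n <*> cg.eval g n
  | .comp cf cg => fun n => cg.eval g n >>= cf.eval g
  | .prec cf cg =>
    Nat.unpaired fun a n =>
      n.rec (cf.eval g a) fun y IH => do
        let i ← IH
        cg.eval g (Nat.pair a (Nat.pair y i))
  | .rfind' cf =>
    Nat.unpaired fun a m =>
      (Nat.rfind fun n => (fun m => m = 0) <$> cf.eval g (Nat.pair a (n + m))).map (· + m)

/-- The `n`-th oracle code. -/
def OCode.ofNat : ℕ → OCode
  | 0 => .zero
  | 1 => .succ
  | 2 => .left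
  | 3 => .right
  | 4 => .oracle
  | n + 5 =>
    have h1 : (n / 4).unpair.1 < n + 5 :=
      lt_of_le_of_lt (le_trans (Nat.unpair_left_le _) (Nat.div_le_self _ _)) (by omega)
    have h2 : (n / 4).unpair.2 < n + 5 :=
      lt_of_le_of_lt (le_trans (Nat.unpair_right_le _) (Nat.div_le_self _ _)) (by omega)
    if n % 4 = 0 then .pair (OCode.ofNat (n / 4).unpair.1) (OCode.ofNat (n / 4).unpair.2)
    else if n % 4 = 1 then .comp (OCode.ofNat (n / 4).unpair.1) (OCode.ofNat (n / 4).unpair.2)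
    else if n % 4 = 2 then .prec (OCode.ofNat (n / 4).unpair.1) (OCode.ofNat (n / 4).unpair.2)
    else .rfind' (OCode.ofNat (n / 4).unpair.1)

/-- `φ_e^g`: the evaluation of the `e`-th oracle code relative to the oracle `g`. -/
def phi (g : ℕ →. ℕ) (e : ℕ) : ℕ →. ℕ := (OCode.ofNat e).eval g

/-- `H_i^A`: the set of (codes of) oracle programs which, run with the characteristic
function of `A` as oracle, halt on input `0` with output `i`. -/
def Hset (A : Set ℕ) (i : ℕ) : Set ℕ := {e : ℕ | (i : ℕ) ∈ phi (chi A) e 0}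

/-! Both reductions are many-one reductions of promise problems: if a computable map sends
`P` into `P'` and `Q` into `Q'`, with `P'` and `Q'` disjoint, then querying `d_{P',Q'}` at the
image decides `(P, Q)`. Projection to the first coordinate maps `H₀ ⊗ H₁` into `H₀` and
`H₁ ⊗ H₀` into `H₁`. Conversely `e ↦ ⟨e, ē⟩` maps `H₀` into `H₀ ⊗ H₁` and `H₁` into `H₁ ⊗ H₀`,
where `ē` is a code that runs `e` and then exchanges the outputs `0` and `1`. -/

theorem Nat.RecursiveIn'.of_partrec {g f : ℕ →. ℕ} (hf : Nat.Partrec f) :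
    Nat.RecursiveIn' g f := by
  induction hf with
  | zero => exact .zero
  | succ => exact .succ
  | left => exact .left
  | right => exact .right
  | pair _ _ ihf ihh => exact .pair ihf ihh
  | comp _ _ ihf ihh => exact .comp ihf ihh
  | prec _ _ ihf ihh => exact .prec ihf ihh
  | rfind _ ihf => exact .rfind ihf

open Classical in
theorem mem_dOracle {P Q : Set ℕ} {n a : ℕ} :
    a ∈ dOracle P Q n ↔ n ∈ P ∪ Q ∧ a = if n ∈ Q then 1 else 0 :=
  ⟨fun ⟨h, ha⟩ => ⟨h, ha.symm⟩, fun ⟨h, ha⟩ => ⟨h, ha.symm⟩⟩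

theorem t1Reducible_dOracle_of_mapsTo {P Q P' Q' : Set ℕ} {f : ℕ → ℕ} (hf : Computable f)
    (hP : Set.MapsTo f P P') (hQ : Set.MapsTo f Q Q') (hPQ' : Disjoint P' Q') :
    T1Reducible (dOracle P Q) (dOracle P' Q') := by
  have hf' : Nat.Partrec (f : ℕ →. ℕ) := Partrec.nat_iff.1 hf.partrec
  refine ⟨_, .comp .oracle (.of_partrec hf'), fun n a ha => ?_⟩
  refine Part.mem_bind (Part.mem_some (f n)) (mem_dOracle.2 ?_)
  obtain ⟨hn, rfl⟩ := mem_dOracle.1 ha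
  by_cases hnQ : n ∈ Q
  · exact ⟨Or.inr (hQ hnQ), by simp [hnQ, hQ hnQ]⟩
  · have hnP : n ∈ P := hn.resolve_right hnQ
    have hfnQ' : f n ∉ Q' := hPQ'.notMem_of_mem_left (hP hnP)
    exact ⟨Or.inl (hP hnP), by simp [hnQ, hfnQ']⟩

theorem pair_mem_tensor {P Q : Set ℕ} {p q : ℕ} (hp : p ∈ P) (hq : q ∈ Q) :
    Nat.pair p q ∈ P ⊗ Q :=
  ⟨p, hp, q, hq, rfl⟩

theorem mapsTo_unpair_fst_tensor (P Q : Set ℕ) :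
    Set.MapsTo (fun n => n.unpair.1) (P ⊗ Q) P := by
  rintro _ ⟨p, hp, q, -, rfl⟩
  simpa using hp

theorem Disjoint.tensor {P Q : Set ℕ} (h : Disjoint P Q) (P' Q' : Set ℕ) :
    Disjoint (P ⊗ P') (Q ⊗ Q') := by
  rw [Set.disjoint_left]
  rintro _ ⟨p, hp, p', -, rfl⟩ ⟨q, hq, q', -, hpq⟩
  obtain ⟨rfl, -⟩ := Nat.pair_eq_pair.1 hpq
  exact h.notMem_of_mem_left hp hq

theorem disjoint_Hset (A : Set ℕ) {i j : ℕ} (hij : i ≠ j) : Disjoint (Hset A i) (Hset A j) :=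
  Set.disjoint_left.2 fun _ hi hj => hij (Part.mem_unique hi hj)

def compCode (a b : ℕ) : ℕ := 4 * Nat.pair a b + 6

theorem OCode.ofNat_compCode (a b : ℕ) :
    OCode.ofNat (compCode a b) = .comp (.ofNat a) (.ofNat b) := by
  rw [compCode, show 4 * Nat.pair a b + 6 = (4 * Nat.pair a b + 1) + 5 by omega, OCode.ofNat]
  simp [Nat.mul_add_div]

theorem phi_compCode (g : ℕ →. ℕ) (a b n : ℕ) :
    phi g (compCode a b) n = phi g b n >>= phi g a := by
  rw [phi, OCode.ofNat_compCode]
  rfl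

theorem primrec₂_compCode : Primrec₂ compCode :=
  Primrec.nat_add.comp (Primrec.nat_mul.comp (Primrec.const 4) Primrec₂.natPair)
    (Primrec.const 6)

/-- The codes `1` and `3` are `succ` and `right`, and `m ↦ (m + 1).unpair.2` exchanges `0`
and `1` because `Nat.unpair 1 = (0, 1)` and `Nat.unpair 2 = (1, 0)`. -/
def swapCode (e : ℕ) : ℕ := compCode 3 (compCode 1 e)

theorem mem_phi_swapCode {g : ℕ →. ℕ} {e n m : ℕ} (h : m ∈ phi g e n) :
    (m + 1).unpair.2 ∈ phi g (swapCode e) n := by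
  have h1 : OCode.ofNat 1 = .succ := by rw [OCode.ofNat]
  have h3 : OCode.ofNat 3 = .right := by rw [OCode.ofNat]
  rw [swapCode, phi_compCode, phi_compCode]
  simp only [phi, h1, h3] at h ⊢
  exact Part.mem_bind (Part.mem_bind h (Part.mem_some _)) (Part.mem_some _)

theorem primrec_swapCode : Primrec swapCode :=
  primrec₂_compCode.comp (Primrec.const 3)
    (primrec₂_compCode.comp (Primrec.const 1) Primrec.id)

theorem swapCode_mem_Hset_one {A : Set ℕ} {e : ℕ} (h : e ∈ Hset A 0) : swapCode e ∈ Hset A 1 :=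
  mem_phi_swapCode h

theorem swapCode_mem_Hset_zero {A : Set ℕ} {e : ℕ} (h : e ∈ Hset A 1) :
    swapCode e ∈ Hset A 0 := by
  have h2 : (Nat.unpair 2).2 = 0 := by simp [Nat.unpair]
  exact h2 ▸ mem_phi_swapCode h

theorem stmt15 (A : Set ℕ) :
    T1Reducible (dOracle (Hset A 0 ⊗ Hset A 1) (Hset A 1 ⊗ Hset A 0))
        (dOracle (Hset A 0) (Hset A 1)) ∧
      T1Reducible (dOracle (Hset A 0) (Hset A 1))
        (dOracle (Hset A 0 ⊗ Hset A 1) (Hset A 1 ⊗ Hset A 0)) := by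
  have hH : Disjoint (Hset A 0) (Hset A 1) := disjoint_Hset A zero_ne_one
  constructor
  · exact t1Reducible_dOracle_of_mapsTo (Computable.fst.comp Computable.unpair)
      (mapsTo_unpair_fst_tensor _ _) (mapsTo_unpair_fst_tensor _ _) hH
  · exact t1Reducible_dOracle_of_mapsTo
      (Primrec₂.natPair.comp Primrec.id primrec_swapCode).to_comp
      (fun _ he => pair_mem_tensor he (swapCode_mem_Hset_one he))
      (fun _ he => pair_mem_tensor he (swapCode_mem_Hset_zero he)) (hH.tensor _ _)
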